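/- Let m ≥ 3 and let ρ : C_m → GL_n(ℤ) be a faithful representation of the cyclic group C_m of order m, making ℤⁿ into a ℤC_m-module. If m is not divisible by any prime larger than 3, then rk_{C_m}(ℤⁿ) ≤ n − 1. -/

import Mathlib

/-- The minimal number of generators of `ℤⁿ` as a `ℤG`-module, where the
`G`-action on `ℤⁿ` is given by the integral representation `ρ : G → GL_n(ℤ)`. -/
noncomputable def moduleRank (n : ℕ) {G : Type*} [Group G]
    (ρ : G →* Matrix.GeneralLinearGroup (Fin n) ℤ) : ℕ :=
  sInf {k | ∃ S : Finset (Fin n → ℤ), S.card = k ∧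
    Submodule.span ℤ
      {x | ∃ g : G, ∃ s ∈ S, x = ((ρ g : Matrix (Fin n) (Fin n) ℤ)).mulVec s} = ⊤}


open Module in
theorem core_exists {R : Type} [CommRing R] [IsDomain R] [IsPrincipalIdealRing R]
    (θ : R) (c d : ℤ) (re im : R →ₗ[ℤ] ℤ)
    (hre1 : re 1 = 1) (him1 : im 1 = 0) (hreθ : re θ = 0) (himθ : im θ = 1)
    (hrepr : ∀ r : R, re r • (1 : R) + im r • θ = r)
    (hθ2 : θ * θ = c • (1 : R) + d • θ)
    (hpos : ∀ a b : ℤ, a * a + a * b * d - b * b * c = 0 → a = 0 ∧ b = 0)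
    {N : Type} [AddCommGroup N] [Module.Finite ℤ N]
    [NoZeroSMulDivisors ℤ N] [Nontrivial N]
    (T : N →ₗ[ℤ] N) (hT : ∀ x : N, T (T x) = c • x + d • T x) :
    ∃ (v : N) (φ₁ φ₂ : N →ₗ[ℤ] ℤ),
      φ₁ v = 1 ∧ φ₂ v = 0 ∧ φ₁ (T v) = 0 ∧ φ₂ (T v) = 1 := by
  have h2 : θ * θ = (c : R) + (d : R) * θ := by
    rw [hθ2]; rw [zsmul_eq_mul, zsmul_eq_mul, mul_one]
  have key : ∀ a b a' b' : ℤ,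
      (a • (1:R) + b • θ) * (a' • (1:R) + b' • θ)
        = (a*a' + b*b'*c) • (1:R) + (a*b' + b*a' + b*b'*d) • θ := by
    intro a b a' b'
    simp only [zsmul_eq_mul, mul_one]
    push_cast
    linear_combination ((b:R) * (b':R)) * h2
  have hmul : ∀ r s : R, r * s = (re r * re s + im r * im s * c) • (1:R)
      + (re r * im s + im r * re s + im r * im s * d) • θ := by
    intro r s
    conv_lhs => rw [← hrepr r, ← hrepr s]
    rw [key]
  have hre_mul : ∀ r s : R, re (r*s) = re r * re s + im r * im s * c := by
    intro r s
    rw [hmul r s, map_add, map_smul, map_smul, hre1, hreθ, smul_eq_mul, smul_eq_mul,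
      mul_one, mul_zero, add_zero]
  have him_mul : ∀ r s : R, im (r*s) = re r * im s + im r * re s + im r * im s * d := by
    intro r s
    rw [hmul r s, map_add, map_smul, map_smul, him1, himθ, smul_eq_mul, smul_eq_mul,
      mul_zero, mul_one, zero_add]
  have happly : ∀ (a b : ℤ) (x : N),
      (a • (LinearMap.id : N →ₗ[ℤ] N) + b • T) x = a • x + b • T x := by
    intro a b x
    simp only [LinearMap.add_apply, LinearMap.smul_apply, LinearMap.id_apply]
  have hstep : ∀ (a b : ℤ) (x : N), T (a • x + b • T x) = (b*c) • x + (a + b*d) • T x := by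
    intro a b x
    rw [map_add, T.map_smul, T.map_smul, hT, smul_add, smul_smul, smul_smul, add_smul]
    abel
  let f : R →+* Module.End ℤ N :=
    { toFun := fun r => re r • (LinearMap.id : N →ₗ[ℤ] N) + im r • T
      map_one' := by
        ext x
        rw [happly, hre1, him1, Module.End.one_apply, one_smul, zero_smul, add_zero]
      map_mul' := by
        intro r s
        ext x
        rw [Module.End.mul_apply, happly, happly, happly, T.map_add, T.map_smul, T.map_smul,
          hT, hre_mul, him_mul]
        simp only [smul_add, smul_smul]
        rw [show re r * re s + im r * im s * c = re r * re s + im r * (im s * c) from by ring,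
          show re r * im s + im r * re s + im r * im s * d
              = re r * im s + (im r * re s + im r * (im s * d)) from by ring,
          add_smul, add_smul, add_smul]
        abel
      map_zero' := by
        ext x
        rw [happly, map_zero, map_zero, zero_smul, zero_smul, add_zero, LinearMap.zero_apply]
      map_add' := by
        intro r s
        ext x
        rw [happly, LinearMap.add_apply, happly, happly, map_add, map_add, add_smul, add_smul]
        abel }
  have hfapp : ∀ (r : R) (x : N), f r x = re r • x + im r • T x := fun r x => happly _ _ x
  letI : Module R N := Module.compHom N f
  have hsmul : ∀ (r : R) (x : N), r • x = re r • x + im r • T x := fun r x => hfapp r x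
  letI : IsScalarTower ℤ R N := ⟨fun z r x => by
    have h1 : (z • r) • x = f (z • r) x := rfl
    have h2 : r • x = f r x := rfl
    rw [h1, h2, map_zsmul f z r, LinearMap.smul_apply]⟩
  haveI : Module.Finite R N := Module.Finite.of_restrictScalars_finite ℤ R N
  haveI : NoZeroSMulDivisors R N := by
    refine ⟨fun {r x} h => ?_⟩
    by_cases hr : r = 0
    · exact Or.inl hr
    right
    set a := re r with ha
    set b := im r with hb
    have hNval : a*a + a*b*d - b*b*c ≠ 0 := by
      intro h0
      obtain ⟨ha0, hb0⟩ := hpos a b h0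
      apply hr
      rw [← hrepr r, ← ha, ← hb, ha0, hb0]
      simp
    have e1 : (a + d*b)*a + (-b)*b*c = a*a + a*b*d - b*b*c := by ring
    have e2 : (a + d*b)*b + (-b)*a + (-b)*b*d = 0 := by ring
    have hconj : ((a + d*b) • (1:R) + (-b) • θ) * r
        = (a*a + a*b*d - b*b*c) • (1:R) + (0:ℤ) • θ := by
      conv_lhs => rw [← hrepr r, ← ha, ← hb]
      rw [key, e1, e2]
    have h1 : ((a + d*b) • (1:R) + (-b) • θ) • (r • x) = 0 := by rw [h, smul_zero]
    rw [← mul_smul, hconj] at h1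
    rw [zero_smul, add_zero, smul_assoc, one_smul] at h1
    exact (smul_eq_zero.mp h1).resolve_left hNval
  haveI : Module.Free R N := Module.free_of_finite_type_torsion_free'
  let b := Module.Free.chooseBasis R N
  haveI : Nonempty (Module.Free.ChooseBasisIndex R N) := b.index_nonempty
  let i : Module.Free.ChooseBasisIndex R N := Classical.arbitrary _
  set v := b i with hv
  have hcv : b.coord i v = 1 := by simp [hv]
  have hTv : T v = θ • v := by
    rw [hsmul θ v, hreθ, himθ]
    simp
  have hcTv : b.coord i (T v) = θ := by
    rw [hTv, map_smul, hcv, smul_eq_mul, mul_one]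
  refine ⟨v, re.comp ((b.coord i).restrictScalars ℤ), im.comp ((b.coord i).restrictScalars ℤ),
    ?_, ?_, ?_, ?_⟩ <;>
    simp [hcv, hcTv, hre1, him1, hreθ, himθ]


theorem exists_retraction {n : ℕ} (ψ : (Fin n → ℤ) →ₗ[ℤ] (Fin n → ℤ)) :
    ∃ r : (Fin n → ℤ) →ₗ[ℤ] (LinearMap.ker ψ), ∀ x : LinearMap.ker ψ, r x = x := by
  set L := LinearMap.ker ψ with hL
  haveI : Module.Free ℤ ((Fin n → ℤ) ⧸ L) :=
    Module.Free.of_equiv (LinearMap.quotKerEquivRange ψ).symm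
  obtain ⟨s, hs⟩ := Module.projective_lifting_property L.mkQ LinearMap.id
    (Submodule.mkQ_surjective L)
  have hmem : ∀ x : Fin n → ℤ, x - s (L.mkQ x) ∈ L := by
    intro x
    have h1 : L.mkQ (x - s (L.mkQ x)) = 0 := by
      rw [map_sub]
      have h2 := LinearMap.congr_fun hs (L.mkQ x)
      simp only [LinearMap.comp_apply, LinearMap.id_apply] at h2
      rw [h2, sub_self]
    rwa [← LinearMap.mem_ker, Submodule.ker_mkQ] at h1
  refine ⟨LinearMap.codRestrict L (LinearMap.id - s.comp L.mkQ) (by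
    intro x
    simpa using hmem x), ?_⟩
  intro x
  apply Subtype.ext
  have hx0 : L.mkQ (x : Fin n → ℤ) = 0 := by
    rw [← LinearMap.mem_ker, Submodule.ker_mkQ]; exact x.2
  have hx1 : (Submodule.Quotient.mk (x : Fin n → ℤ) : (Fin n → ℤ) ⧸ L) = 0 := hx0
  simp [LinearMap.codRestrict, hx1]

open Module in
theorem exists_pair {n : ℕ} (E : Module.End ℤ (Fin n → ℤ)) (c d : ℤ)
    {R : Type} [CommRing R] [IsDomain R] [IsPrincipalIdealRing R]
    (θ : R) (re im : R →ₗ[ℤ] ℤ)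
    (hre1 : re 1 = 1) (him1 : im 1 = 0) (hreθ : re θ = 0) (himθ : im θ = 1)
    (hrepr : ∀ r : R, re r • (1 : R) + im r • θ = r)
    (hθ2 : θ * θ = c • (1 : R) + d • θ)
    (hpos : ∀ a b : ℤ, a * a + a * b * d - b * b * c = 0 → a = 0 ∧ b = 0)
    (hker : LinearMap.ker (E * E - (c • (1 : Module.End ℤ (Fin n → ℤ)) + d • E)) ≠ ⊥) :
    ∃ (v : Fin n → ℤ) (φ₁ φ₂ : (Fin n → ℤ) →ₗ[ℤ] ℤ),
      φ₁ v = 1 ∧ φ₂ v = 0 ∧ φ₁ (E v) = 0 ∧ φ₂ (E v) = 1 := by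
  set ψ : Module.End ℤ (Fin n → ℤ) := E * E - (c • 1 + d • E) with hψ
  set L := LinearMap.ker ψ with hLdef
  have hψapp : ∀ x, ψ x = E (E x) - (c • x + d • E x) := by
    intro x
    simp [hψ, LinearMap.sub_apply, LinearMap.add_apply, LinearMap.smul_apply,
      Module.End.mul_apply, Module.End.one_apply]
  have hcomm : ∀ x, ψ (E x) = E (ψ x) := by
    intro x
    rw [hψapp, hψapp, map_sub, map_add, E.map_smul, E.map_smul]
  have hEL : ∀ x ∈ L, E x ∈ L := by
    intro x hx
    have : ψ x = 0 := hx
    rw [LinearMap.mem_ker] at *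
    rw [hcomm, this, map_zero]
  let T : L →ₗ[ℤ] L := E.restrict hEL
  haveI : Module.Finite ℤ L := Module.Finite.iff_fg.mpr (IsNoetherian.noetherian L)
  haveI : Nontrivial L := Submodule.nontrivial_iff_ne_bot.mpr hker
  have hTcoe : ∀ x : L, (T x : Fin n → ℤ) = E (x : Fin n → ℤ) := fun x => rfl
  have hT : ∀ x : L, T (T x) = c • x + d • T x := by
    intro x
    apply Subtype.ext
    have hx : ψ (x : Fin n → ℤ) = 0 := x.2
    rw [hψapp] at hx
    have hx2 := sub_eq_zero.mp hx
    show E (E (x : Fin n → ℤ)) = ((c • x + d • T x : L) : Fin n → ℤ)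
    rw [hx2]
    push_cast
    simp [hTcoe]
  haveI : NoZeroSMulDivisors ℤ L :=
    Function.Injective.noZeroSMulDivisors _ Subtype.val_injective rfl (fun _ _ => rfl)
  obtain ⟨v, φ₁, φ₂, h1, h2, h3, h4⟩ := core_exists θ c d re im hre1 him1 hreθ himθ hrepr hθ2 hpos T hT
  obtain ⟨ret, hret⟩ := exists_retraction ψ
  have hEv : E (v : Fin n → ℤ) = ((T v : L) : Fin n → ℤ) := (hTcoe v).symm
  refine ⟨(v : Fin n → ℤ), φ₁ ∘ₗ ret, φ₂ ∘ₗ ret, ?_, ?_, ?_, ?_⟩ <;>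
    simp [LinearMap.comp_apply, hret, hEv, h1, h2, h3, h4]


noncomputable def gre : GaussianInt →ₗ[ℤ] ℤ where
  toFun := Zsqrtd.re
  map_add' a b := rfl
  map_smul' z w := by
    simp only [zsmul_eq_mul, RingHom.id_apply, smul_eq_mul]
    rw [Zsqrtd.re_mul]
    simp

noncomputable def gim : GaussianInt →ₗ[ℤ] ℤ where
  toFun := Zsqrtd.im
  map_add' a b := rfl
  map_smul' z w := by
    simp only [zsmul_eq_mul, RingHom.id_apply, smul_eq_mul]
    rw [Zsqrtd.im_mul]
    simp

theorem gauss_data :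
    ∃ (re im : GaussianInt →ₗ[ℤ] ℤ),
    re 1 = 1 ∧ im 1 = 0 ∧ re Zsqrtd.sqrtd = 0 ∧ im Zsqrtd.sqrtd = 1 ∧
    (∀ r : GaussianInt, re r • (1 : GaussianInt) + im r • Zsqrtd.sqrtd = r) ∧
    (Zsqrtd.sqrtd * Zsqrtd.sqrtd : GaussianInt)
        = (-1 : ℤ) • (1 : GaussianInt) + (0 : ℤ) • Zsqrtd.sqrtd ∧
    (∀ a b : ℤ, a * a + a * b * 0 - b * b * (-1) = 0 → a = 0 ∧ b = 0) := by
  refine ⟨gre, gim, rfl, rfl, rfl, rfl, ?_, ?_, ?_⟩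
  · intro r
    have : ∀ (z : ℤ) (w : GaussianInt), z • w = (z : GaussianInt) * w := fun z w =>
      zsmul_eq_mul w z
    apply Zsqrtd.ext <;>
      simp [this, Zsqrtd.re_mul, Zsqrtd.im_mul, gre, gim]
  · apply Zsqrtd.ext <;> simp [Zsqrtd.re_mul, Zsqrtd.im_mul]
  · intro a b h
    constructor <;> nlinarith [sq_nonneg a, sq_nonneg b]


open NumberField IsCyclotomicExtension in
theorem eis_data : ∃ (R : Type) (_ : CommRing R) (_ : IsDomain R)
    (_ : IsPrincipalIdealRing R) (θ : R) (re im : R →ₗ[ℤ] ℤ),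
    re 1 = 1 ∧ im 1 = 0 ∧ re θ = 0 ∧ im θ = 1 ∧
    (∀ r : R, re r • (1 : R) + im r • θ = r) ∧
    (θ * θ = (-1 : ℤ) • (1 : R) + (-1 : ℤ) • θ) ∧
    (∀ a b : ℤ, a * a + a * b * (-1) - b * b * (-1) = 0 → a = 0 ∧ b = 0) := by
  classical
  set K := CyclotomicField 3 ℚ with hK
  haveI : IsCyclotomicExtension {3} ℚ K := CyclotomicField.isCyclotomicExtension 3 ℚ
  haveI : NumberField K := IsCyclotomicExtension.numberField {3} ℚ K
  haveI : Fact (Nat.Prime ((3 : ℕ+) : ℕ)) := ⟨by norm_num⟩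
  haveI hpid : IsPrincipalIdealRing (𝓞 K) := IsCyclotomicExtension.Rat.three_pid K
  set ζ := IsCyclotomicExtension.zeta 3 ℚ K with hζdef
  have hζ : IsPrimitiveRoot ζ 3 := IsCyclotomicExtension.zeta_spec 3 ℚ K
  set pb := hζ.integralPowerBasis with hpb
  have hdim : pb.dim = 2 := by
    rw [hζ.integralPowerBasis_dim]
    rfl
  set i0 : Fin pb.dim := ⟨0, by omega⟩ with hi0
  set i1 : Fin pb.dim := ⟨1, by omega⟩ with hi1
  have hb0 : pb.basis i0 = 1 := by
    rw [pb.basis_eq_pow]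
    simp [hi0]
  have hb1 : pb.basis i1 = pb.gen := by
    rw [pb.basis_eq_pow]
    simp [hi1]
  have hne : i0 ≠ i1 := by simp [hi0, hi1, Fin.ext_iff]
  refine ⟨𝓞 K, inferInstance, inferInstance, hpid, pb.gen,
    pb.basis.coord i0, pb.basis.coord i1, ?_, ?_, ?_, ?_, ?_, ?_, ?_⟩
  · rw [← hb0, Module.Basis.coord_apply, Module.Basis.repr_self]; simp
  · rw [← hb0, Module.Basis.coord_apply, Module.Basis.repr_self]
    exact Finsupp.single_eq_of_ne' hne
  · rw [← hb1, Module.Basis.coord_apply, Module.Basis.repr_self]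
    exact Finsupp.single_eq_of_ne' (Ne.symm hne)
  · rw [← hb1, Module.Basis.coord_apply, Module.Basis.repr_self]; simp
  · intro r
    have huniv : (Finset.univ : Finset (Fin pb.dim)) = {i0, i1} := by
      ext j
      simp only [Finset.mem_univ, true_iff, Finset.mem_insert, Finset.mem_singleton,
        Fin.ext_iff, hi0, hi1]
      have := j.2
      omega
    have hsum := pb.basis.sum_repr r
    rw [huniv, Finset.sum_insert (by simpa using hne), Finset.sum_singleton, hb0, hb1] at hsum
    simpa [Module.Basis.coord_apply] using hsum
  · have h3 : (ζ : K) ^ 3 = 1 := hζ.pow_eq_one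
    have hne1 : (ζ : K) ≠ 1 := hζ.ne_one (by norm_num)
    have hfac : ((ζ : K) - 1) * (ζ ^ 2 + ζ + 1) = 0 := by linear_combination h3
    have hz : (ζ : K) ^ 2 + ζ + 1 = 0 := by
      rcases mul_eq_zero.mp hfac with h | h
      · exact absurd (sub_eq_zero.mp h) hne1
      · exact h
    have hgen : pb.gen = hζ.toInteger := hζ.integralPowerBasis_gen
    apply RingOfIntegers.coe_injective
    push_cast
    rw [hgen]
    have hcoe : algebraMap (𝓞 K) K hζ.toInteger = ζ := rfl
    simp only [map_add, map_mul, map_neg, map_one, zsmul_eq_mul, map_intCast, hcoe]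
    push_cast
    linear_combination hz
  · intro a b h
    constructor <;> nlinarith [sq_nonneg a, sq_nonneg b, sq_nonneg (a - b), sq_nonneg (a + b)]


open Module in
theorem rank_bound_of_pair {n m : ℕ}
    (ρ : Multiplicative (ZMod m) →* Matrix.GeneralLinearGroup (Fin n) ℤ)
    (g : Multiplicative (ZMod m)) (v w : Fin n → ℤ) (φ₁ φ₂ : (Fin n → ℤ) →ₗ[ℤ] ℤ)
    (hw : w = ((ρ g : Matrix (Fin n) (Fin n) ℤ)).mulVec v)
    (h1 : φ₁ v = 1) (h2 : φ₂ v = 0) (h3 : φ₁ w = 0) (h4 : φ₂ w = 1) :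
    (moduleRank n ρ : ℤ) ≤ (n : ℤ) - 1 := by
  classical
  set p : Submodule ℤ (Fin n → ℤ) := Submodule.span ℤ {v, w} with hp
  set Kr : Submodule ℤ (Fin n → ℤ) := LinearMap.ker φ₁ ⊓ LinearMap.ker φ₂ with hKr
  have hmemp : ∀ x : Fin n → ℤ, φ₁ x • v + φ₂ x • w ∈ p := fun x =>
    Submodule.add_mem _ (Submodule.smul_mem _ _ (Submodule.subset_span (by simp)))
      (Submodule.smul_mem _ _ (Submodule.subset_span (by simp)))
  have hmemK : ∀ x : Fin n → ℤ, x - (φ₁ x • v + φ₂ x • w) ∈ Kr := by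
    intro x
    refine Submodule.mem_inf.mpr ⟨?_, ?_⟩ <;>
      rw [LinearMap.mem_ker, map_sub, map_add, map_smul, map_smul]
    · rw [h1, h3]; simp
    · rw [h2, h4]; simp
  have hcompl : IsCompl p Kr := by
    constructor
    · rw [Submodule.disjoint_def]
      intro x hxp hxK
      obtain ⟨a, b, hab⟩ := Submodule.mem_span_pair.mp hxp
      obtain ⟨hk1, hk2⟩ := Submodule.mem_inf.mp hxK
      rw [LinearMap.mem_ker, ← hab] at hk1 hk2
      simp only [map_add, map_smul, h1, h2, h3, h4, smul_eq_mul, mul_one, mul_zero,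
        add_zero, zero_add] at hk1 hk2
      rw [← hab, hk1, hk2, zero_smul, zero_smul, add_zero]
    · rw [codisjoint_iff, eq_top_iff]
      intro x _
      have hxd : x = (φ₁ x • v + φ₂ x • w) + (x - (φ₁ x • v + φ₂ x • w)) := by abel
      rw [hxd]
      exact Submodule.add_mem_sup (hmemp x) (hmemK x)
  -- finrank of p is 2
  let f2 : (Fin 2 → ℤ) →ₗ[ℤ] (Fin n → ℤ) :=
    (LinearMap.proj 0 : (Fin 2 → ℤ) →ₗ[ℤ] ℤ).smulRight v
      + (LinearMap.proj 1 : (Fin 2 → ℤ) →ₗ[ℤ] ℤ).smulRight w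
  have hf2 : ∀ c : Fin 2 → ℤ, f2 c = c 0 • v + c 1 • w := by
    intro c
    simp [f2]
  have hf2mem : ∀ c : Fin 2 → ℤ, f2 c ∈ p := fun c => by
    rw [hf2]
    exact Submodule.add_mem _ (Submodule.smul_mem _ _ (Submodule.subset_span (by simp)))
      (Submodule.smul_mem _ _ (Submodule.subset_span (by simp)))
  have hbij : Function.Bijective (f2.codRestrict p hf2mem) := by
    constructor
    · intro c c' hcc
      have hcc2 : f2 c = f2 c' := congrArg Subtype.val hcc
      rw [hf2, hf2] at hcc2
      have e1 := congrArg φ₁ hcc2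
      have e2 := congrArg φ₂ hcc2
      simp only [map_add, map_smul, h1, h2, h3, h4, smul_eq_mul, mul_one, mul_zero,
        add_zero, zero_add] at e1 e2
      funext i
      fin_cases i
      · exact e1
      · exact e2
    · rintro ⟨x, hx⟩
      obtain ⟨a, b, hab⟩ := Submodule.mem_span_pair.mp hx
      refine ⟨![a, b], ?_⟩
      apply Subtype.ext
      show f2 ![a, b] = x
      rw [hf2, ← hab]
      simp
  have hrankp : finrank ℤ p = 2 := by
    have := LinearEquiv.finrank_eq (LinearEquiv.ofBijective (f2.codRestrict p hf2mem) hbij)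
    rw [← this, Module.finrank_pi]
    simp
  haveI : Module.Finite ℤ p := Module.Finite.iff_fg.mpr (IsNoetherian.noetherian p)
  haveI : Module.Finite ℤ Kr := Module.Finite.iff_fg.mpr (IsNoetherian.noetherian Kr)
  have heq : finrank ℤ p + finrank ℤ Kr = n := by
    have h5 := LinearEquiv.finrank_eq (Submodule.prodEquivOfIsCompl p Kr hcompl)
    rw [Module.finrank_prod, Module.finrank_pi] at h5
    simpa using h5
  -- the generating set
  let bK := Module.Free.chooseBasis ℤ Kr
  let S : Finset (Fin n → ℤ) :=
    insert v (Finset.image (fun i => ((bK i : Kr) : Fin n → ℤ)) Finset.univ)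
  have hvnot : v ∉ Finset.image (fun i => ((bK i : Kr) : Fin n → ℤ)) Finset.univ := by
    intro hv
    obtain ⟨i, _, hi⟩ := Finset.mem_image.mp hv
    have : v ∈ Kr := hi ▸ (bK i).2
    have := (Submodule.mem_inf.mp this).1
    rw [LinearMap.mem_ker, h1] at this
    exact one_ne_zero this
  have hinj : Function.Injective (fun i : Module.Free.ChooseBasisIndex ℤ Kr =>
      ((bK i : Kr) : Fin n → ℤ)) :=
    Subtype.val_injective.comp bK.injective
  have hScard : S.card = finrank ℤ Kr + 1 := by
    rw [Finset.card_insert_of_notMem hvnot, Finset.card_image_of_injective _ hinj,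
      Finset.card_univ, ← Module.finrank_eq_card_chooseBasisIndex]
  -- span property
  have hspan : Submodule.span ℤ
      {x | ∃ g' : Multiplicative (ZMod m), ∃ s ∈ S,
        x = ((ρ g' : Matrix (Fin n) (Fin n) ℤ)).mulVec s} = ⊤ := by
    rw [eq_top_iff]
    intro x _
    have hx2 : x ∈ p ⊔ Kr := by rw [hcompl.codisjoint.eq_top]; trivial
    have hvS : v ∈ S := Finset.mem_insert_self _ _
    have hvΩ : v ∈ Submodule.span ℤ {x | ∃ g' : Multiplicative (ZMod m), ∃ s ∈ S,
        x = ((ρ g' : Matrix (Fin n) (Fin n) ℤ)).mulVec s} := by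
      apply Submodule.subset_span
      exact ⟨1, v, hvS, by rw [map_one]; simp⟩
    have hwΩ : w ∈ Submodule.span ℤ {x | ∃ g' : Multiplicative (ZMod m), ∃ s ∈ S,
        x = ((ρ g' : Matrix (Fin n) (Fin n) ℤ)).mulVec s} := by
      apply Submodule.subset_span
      exact ⟨g, v, hvS, hw⟩
    have hple : p ≤ Submodule.span ℤ {x | ∃ g' : Multiplicative (ZMod m), ∃ s ∈ S,
        x = ((ρ g' : Matrix (Fin n) (Fin n) ℤ)).mulVec s} := by
      rw [hp, Submodule.span_le]
      intro y hy
      rcases hy with hy | hy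
      · rw [hy]; exact hvΩ
      · rw [Set.mem_singleton_iff.mp hy]; exact hwΩ
    have hKle : Kr ≤ Submodule.span ℤ {x | ∃ g' : Multiplicative (ZMod m), ∃ s ∈ S,
        x = ((ρ g' : Matrix (Fin n) (Fin n) ℤ)).mulVec s} := by
      intro y hy
      have hsum := congrArg Kr.subtype (bK.sum_repr ⟨y, hy⟩)
      rw [map_sum] at hsum
      rw [show y = Kr.subtype ⟨y, hy⟩ from rfl, ← hsum]
      refine Submodule.sum_mem _ fun i _ => ?_
      rw [map_smul]
      refine Submodule.smul_mem _ _ (Submodule.subset_span ?_)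
      refine ⟨1, ((bK i : Kr) : Fin n → ℤ),
        Finset.mem_insert_of_mem (Finset.mem_image_of_mem _ (Finset.mem_univ i)), ?_⟩
      rw [map_one]; simp
    exact sup_le hple hKle hx2
  have hle : moduleRank n ρ ≤ S.card := Nat.sInf_le ⟨S, rfl, hspan⟩
  rw [hScard] at hle
  rw [hrankp] at heq
  omega

/-- Let `m ≥ 3` and `ρ : C_m → GL_n(ℤ)` a faithful representation of the cyclic group of
order `m`. If `m` is not divisible by any prime larger than `3`, then
`rk_{C_m}(ℤⁿ) ≤ n - 1`. -/
theorem rank_le_of_faithful_cyclic_rep_of_no_large_prime_dvd (n m : ℕ) (hm : 3 ≤ m)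
    (ρ : Multiplicative (ZMod m) →* Matrix.GeneralLinearGroup (Fin n) ℤ)
    (hρ : Function.Injective ρ)
    (hdvd : ∀ p : ℕ, p.Prime → p ∣ m → p ≤ 3) :
    (moduleRank n ρ : ℤ) ≤ (n : ℤ) - 1 := by
  classical
  have hm0 : m ≠ 0 := by omega
  haveI : NeZero m := ⟨hm0⟩
  set g0 : Multiplicative (ZMod m) := Multiplicative.ofAdd 1 with hg0
  set A := ρ g0 with hA
  have hordA : orderOf A = m := by
    rw [hA, orderOf_injective ρ hρ, hg0, orderOf_ofAdd_eq_addOrderOf, ZMod.addOrderOf_one]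
  obtain ⟨dd, hdd, hdvd'⟩ : ∃ dd : ℕ, (dd = 3 ∨ dd = 4) ∧ dd ∣ m := by
    by_cases h3 : 3 ∣ m
    · exact ⟨3, Or.inl rfl, h3⟩
    refine ⟨4, Or.inr rfl, ?_⟩
    have h2 : ∀ {q : ℕ}, q.Prime → q ∣ m → q = 2 := by
      intro q hq hqm
      have hle := hdvd q hq hqm
      have h2le := hq.two_le
      interval_cases q
      · rfl
      · exact absurd hqm h3
    have hpow := Nat.eq_prime_pow_of_unique_prime_dvd hm0 h2
    set k := m.primeFactorsList.length
    have hk2 : 2 ≤ k := by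
      by_contra hk
      interval_cases k <;> omega
    rw [hpow]
    exact pow_dvd_pow 2 hk2 |>.trans (by rw [← hpow])
  set gB := g0 ^ (m / dd) with hgB
  set B := ρ gB with hBdef
  have hBA : B = A ^ (m / dd) := by rw [hBdef, hgB, map_pow, hA]
  have hBd : B ^ dd = 1 := by
    rw [hBA, ← pow_mul, Nat.div_mul_cancel hdvd', ← hordA, pow_orderOf_eq_one]
  have hndvd : ∀ k : ℕ, 0 < k → k < m → A ^ k ≠ 1 := by
    intro k hk hkm h
    have hdvd2 := orderOf_dvd_of_pow_eq_one h
    rw [hordA] at hdvd2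
    exact absurd (Nat.le_of_dvd hk hdvd2) (by omega)
  set Bm : Matrix (Fin n) (Fin n) ℤ := (B : Matrix (Fin n) (Fin n) ℤ) with hBm
  set E : Module.End ℤ (Fin n → ℤ) := Matrix.toLin' Bm with hE
  have hEv : ∀ v : Fin n → ℤ, E v = Bm.mulVec v := fun v => Matrix.toLin'_apply Bm v
  have hBme : ∀ j : ℕ, 0 < j → B ^ j = 1 → A ^ (m / dd * j) = 1 := by
    intro j hj hBj
    rw [hBA, ← pow_mul] at hBj
    exact hBj
  have hmdd_pos : 0 < m / dd := Nat.div_pos (Nat.le_of_dvd (by omega) hdvd') (by omega)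
  rcases hdd with h3 | h4
  · -- dd = 3 : Eisenstein case
    subst h3
    obtain ⟨R, _, _, _, θ, re, im, hre1, him1, hreθ, himθ, hrepr, hθ2, hpos⟩ := eis_data
    have hBv3 : Bm * Bm * Bm = 1 := by
      have h := congrArg Units.val hBd
      rw [Units.val_pow_eq_pow_val, Units.val_one] at h
      have h2 : Bm ^ 3 = 1 := by rw [hBm]; exact h
      calc Bm * Bm * Bm = Bm ^ 3 := by noncomm_ring
      _ = 1 := h2
    have hE3 : E * E * E = 1 := by
      rw [hE]
      simp only [Module.End.mul_eq_comp]
      rw [← Matrix.toLin'_mul, ← Matrix.toLin'_mul, hBv3, Matrix.toLin'_one]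
      rfl
    have hker : LinearMap.ker (E * E - ((-1 : ℤ) • (1 : Module.End ℤ (Fin n → ℤ))
        + (-1 : ℤ) • E)) ≠ ⊥ := by
      intro hbot
      set ψ := E * E - ((-1 : ℤ) • (1 : Module.End ℤ (Fin n → ℤ)) + (-1 : ℤ) • E) with hψ
      have hψeq : ψ = E * E + E + 1 := by
        rw [hψ, neg_smul, neg_smul, one_smul]
        abel
      have hrel : ψ * (E - 1) = 0 := by
        rw [hψeq]
        have : (E * E + E + 1) * (E - 1) = E * E * E - 1 := by noncomm_ring
        rw [this, hE3, sub_self]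
      have hEone : E = 1 := by
        apply LinearMap.ext
        intro x
        have hx : ψ ((E - 1) x) = 0 := by
          rw [← Module.End.mul_apply, hrel, LinearMap.zero_apply]
        have hx2 : (E - 1) x ∈ LinearMap.ker ψ := hx
        rw [hbot, Submodule.mem_bot, LinearMap.sub_apply] at hx2
        exact sub_eq_zero.mp hx2
      have hBone : B = 1 := by
        apply Units.ext
        have h9 : Matrix.toLin' Bm = Matrix.toLin' (1 : Matrix (Fin n) (Fin n) ℤ) := by
          rw [← hE, hEone, Matrix.toLin'_one]
          rfl
        have hBm1 : Bm = 1 := Matrix.toLin'.injective h9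
        rw [Units.val_one, ← hBm1, hBm]
      have : A ^ (m / 3 * 1) = 1 := hBme 1 one_pos (by rw [pow_one, hBone])
      rw [mul_one] at this
      exact hndvd (m / 3) hmdd_pos (Nat.div_lt_self (by omega) (by omega)) this
    obtain ⟨v, φ₁, φ₂, h1, h2, h3, h4⟩ := exists_pair E (-1) (-1) θ re im
      hre1 him1 hreθ himθ hrepr hθ2 hpos hker
    exact rank_bound_of_pair ρ gB v (E v) φ₁ φ₂ (by rw [hEv, hBm, hBdef]) h1 h2 h3 h4
  · -- dd = 4 : Gaussian case
    subst h4
    obtain ⟨re, im, hre1, him1, hreθ, himθ, hrepr, hθ2, hpos⟩ := gauss_data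
    have hBv4 : Bm * Bm * (Bm * Bm) = 1 := by
      have h := congrArg Units.val hBd
      rw [Units.val_pow_eq_pow_val, Units.val_one] at h
      have h2 : Bm ^ 4 = 1 := by rw [hBm]; exact h
      calc Bm * Bm * (Bm * Bm) = Bm ^ 4 := by noncomm_ring
      _ = 1 := h2
    have hE4 : (E * E) * (E * E) = 1 := by
      rw [hE]
      simp only [Module.End.mul_eq_comp]
      rw [← Matrix.toLin'_mul, ← Matrix.toLin'_mul, hBv4, Matrix.toLin'_one]
      rfl
    have hker : LinearMap.ker (E * E - ((-1 : ℤ) • (1 : Module.End ℤ (Fin n → ℤ))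
        + (0 : ℤ) • E)) ≠ ⊥ := by
      intro hbot
      set ψ := E * E - ((-1 : ℤ) • (1 : Module.End ℤ (Fin n → ℤ)) + (0 : ℤ) • E) with hψ
      have hψeq : ψ = E * E + 1 := by
        rw [hψ, neg_smul, zero_smul, one_smul]
        abel
      have hrel : ψ * (E * E - 1) = 0 := by
        rw [hψeq]
        have : (E * E + 1) * (E * E - 1) = (E * E) * (E * E) - 1 := by noncomm_ring
        rw [this, hE4, sub_self]
      have hEone : E * E = 1 := by
        apply LinearMap.ext
        intro x
        have hx : ψ ((E * E - 1) x) = 0 := by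
          rw [← Module.End.mul_apply, hrel, LinearMap.zero_apply]
        have hx2 : (E * E - 1) x ∈ LinearMap.ker ψ := hx
        rw [hbot, Submodule.mem_bot, LinearMap.sub_apply] at hx2
        exact sub_eq_zero.mp hx2
      have hBone : B ^ 2 = 1 := by
        apply Units.ext
        rw [Units.val_pow_eq_pow_val, Units.val_one]
        have h9 : Matrix.toLin' (Bm * Bm) = Matrix.toLin' (1 : Matrix (Fin n) (Fin n) ℤ) := by
          rw [Matrix.toLin'_mul, Matrix.toLin'_one, ← Module.End.mul_eq_comp, ← hE, hEone]
          rfl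
        have hBm1 : Bm * Bm = 1 := Matrix.toLin'.injective h9
        rw [← hBm, pow_two]
        exact hBm1
      have hA2 : A ^ (m / 4 * 2) = 1 := hBme 2 two_pos hBone
      have hlt : m / 4 * 2 < m := by
        obtain ⟨t, ht⟩ := hdvd'
        subst ht
        rw [Nat.mul_div_cancel_left t (by norm_num)]
        omega
      exact hndvd (m / 4 * 2) (by omega) hlt hA2
    obtain ⟨v, φ₁, φ₂, h1, h2, h3, h4⟩ := exists_pair E (-1) 0 Zsqrtd.sqrtd re im
      hre1 him1 hreθ himθ hrepr hθ2 hpos hker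
    exact rank_bound_of_pair ρ gB v (E v) φ₁ φ₂ (by rw [hEv, hBm, hBdef]) h1 h2 h3 h4
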